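/- arXiv:1507.07880 — 5 statements merged into one kernel-verified Lean document; each statement's English description precedes it below -/
import Mathlib

section
/- Let X₁, X₂, … be i.i.d. centered 1-subgaussian random variables, i.e. E[exp(λXᵢ)] ≤ exp(λ²/2) for all λ ∈ ℝ. Then for any ε > 0 and any n ≥ 1, P(∃ t ≤ n : X₁ + ⋯ + X_t ≥ ε) ≤ exp(−ε²/(2n)). -/
/-!
By independence, `M t = exp (l * (X₀ + ⋯ + X_t))` satisfies
`E[M (t+1) | ℱ t] = M t * E[exp (l X_{t+1})]` for the natural filtration `ℱ`, and
`E[exp (l X)] ≥ 1 + l E[X] = 1` for centered `X`, so `M` is a nonnegative submartingale.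
For `l ≥ 0`, Doob's maximal inequality bounds the probability that some partial sum up to
time `n` reaches `ε` by `exp (-l ε) E[M n] ≤ exp (n l² / 2 - l ε)`, and `l = ε / n`
minimizes the exponent.
-/

open MeasureTheory ProbabilityTheory Finset Real

namespace ProbabilityTheory

variable {Ω : Type*} [MeasurableSpace Ω] {μ : Measure Ω} {l : ℝ}

lemma one_le_mgf_of_integral_eq_zero [IsProbabilityMeasure μ] {Y : Ω → ℝ} (hY : Integrable Y μ)
    (hexp : Integrable (fun ω => exp (l * Y ω)) μ) (hY0 : μ[Y] = 0) : 1 ≤ mgf Y μ l :=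
  calc 1 = ∫ ω, (l * Y ω + 1) ∂μ := by
        rw [integral_add (hY.const_mul l) (integrable_const 1), integral_const_mul, hY0]
        simp
    _ ≤ mgf Y μ l := integral_mono ((hY.const_mul l).add (integrable_const 1)) hexp
        fun ω => add_one_le_exp _

variable {X : ℕ → Ω → ℝ}

lemma iIndepFun.condExp_exp_mul_natural_ae_eq_mgf (hX : ∀ i, StronglyMeasurable (X i))
    (hindep : iIndepFun X μ) {i j : ℕ} (hij : i < j) :
    μ[fun ω => exp (l * X j ω) | Filtration.natural X hX i] =ᵐ[μ] fun _ => mgf (X j) μ l :=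
  have := hindep.isProbabilityMeasure
  condExp_indep_eq (hX j).measurable.comap_le (Filtration.le _ i)
    ((measurable_const_mul l).exp.comp (comap_measurable (X j))).stronglyMeasurable
    (hindep.indep_comap_natural_of_lt hX hij)

lemma iIndepFun.submartingale_exp_mul_sum_range_succ (hX : ∀ i, StronglyMeasurable (X i))
    (hindep : iIndepFun X μ) (hint : ∀ i, Integrable (fun ω => exp (l * X i ω)) μ)
    (hmgf : ∀ i, 1 ≤ mgf (X i) μ l) :
    Submartingale (fun t ω => exp (l * ∑ s ∈ range (t + 1), X s ω))
      (Filtration.natural X hX) μ := by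
  have := hindep.isProbabilityMeasure
  set ℱ := Filtration.natural X hX
  set M : ℕ → Ω → ℝ := fun t ω => exp (l * ∑ s ∈ range (t + 1), X s ω)
  have hsum : ∀ t, Measurable[ℱ t] fun ω => ∑ s ∈ range (t + 1), X s ω := fun t =>
    Finset.measurable_sum _ fun s hs => ((Filtration.stronglyAdapted_natural hX s).mono
      (ℱ.mono (Nat.le_of_lt_succ (mem_range.mp hs)))).measurable
  have hadapted : StronglyAdapted ℱ M := fun t =>
    ((hsum t).const_mul l).exp.stronglyMeasurable
  have hM_int : ∀ t, Integrable (M t) μ := fun t => by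
    simpa [Finset.sum_apply] using
      hindep.integrable_exp_mul_sum (fun i => (hX i).measurable) (s := range (t + 1))
        fun i _ => hint i
  have hM_succ : ∀ t, M (t + 1) = M t * fun ω => exp (l * X (t + 1) ω) := fun t => by
    ext ω
    simp only [M, Pi.mul_apply, sum_range_succ _ (t + 1), mul_add, exp_add]
  refine submartingale_nat hadapted hM_int fun t => ?_
  have hpull : μ[M (t + 1) | ℱ t] =ᵐ[μ] M t * μ[fun ω => exp (l * X (t + 1) ω) | ℱ t] := by
    rw [hM_succ]
    exact condExp_mul_of_stronglyMeasurable_left (hadapted t) (hM_succ t ▸ hM_int (t + 1))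
      (hint (t + 1))
  filter_upwards [hpull, hindep.condExp_exp_mul_natural_ae_eq_mgf hX (Nat.lt_succ_self t)]
    with ω hpull_ω hmgf_ω
  rw [hpull_ω, Pi.mul_apply, hmgf_ω]
  exact le_mul_of_one_le_right (exp_pos _).le (hmgf _)

lemma iIndepFun.measure_exists_sum_range_succ_ge_le (hX : ∀ i, Measurable (X i))
    (hindep : iIndepFun X μ) (hint : ∀ i, Integrable (fun ω => exp (l * X i ω)) μ)
    (hmgf : ∀ i, 1 ≤ mgf (X i) μ l) (hl : 0 ≤ l) (ε : ℝ) (n : ℕ) :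
    μ {ω | ∃ t ≤ n, ε ≤ ∑ s ∈ range (t + 1), X s ω} ≤
      ENNReal.ofReal (exp (-l * ε) * mgf (fun ω => ∑ s ∈ range (n + 1), X s ω) μ l) := by
  have := hindep.isProbabilityMeasure
  set M : ℕ → Ω → ℝ := fun t ω => exp (l * ∑ s ∈ range (t + 1), X s ω)
  have hsub : Submartingale M _ μ :=
    hindep.submartingale_exp_mul_sum_range_succ (fun i => (hX i).stronglyMeasurable) hint hmgf
  set c : NNReal := ⟨exp (l * ε), (exp_pos _).le⟩
  have hc : (c : ENNReal) = ENNReal.ofReal (exp (l * ε)) := (ENNReal.ofReal_eq_coe_nnreal _).symm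
  set B := {ω | (c : ℝ) ≤ (range (n + 1)).sup' nonempty_range_add_one fun t => M t ω}
  have hsubset : {ω | ∃ t ≤ n, ε ≤ ∑ s ∈ range (t + 1), X s ω} ⊆ B := by
    rintro ω ⟨t, htn, hεt⟩
    exact le_sup'_of_le (fun t => M t ω) (mem_range.mpr (Nat.lt_succ_of_le htn))
      (exp_le_exp.mpr (mul_le_mul_of_nonneg_left hεt hl))
  have hmax := maximal_ineq hsub (fun t ω => (exp_pos _).le) (ε := c) n
  have hM_int : ∫ ω in B, M n ω ∂μ ≤ mgf (fun ω => ∑ s ∈ range (n + 1), X s ω) μ l :=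
    setIntegral_le_integral (hsub.integrable n) (ae_of_all _ fun ω => (exp_pos _).le)
  calc μ {ω | ∃ t ≤ n, ε ≤ ∑ s ∈ range (t + 1), X s ω}
      ≤ μ B := measure_mono hsubset
    _ = ENNReal.ofReal (exp (-l * ε)) * (c * μ B) := by
        rw [← mul_assoc, hc, ← ENNReal.ofReal_mul (exp_pos _).le, ← exp_add, neg_mul,
          neg_add_cancel, exp_zero, ENNReal.ofReal_one, one_mul]
    _ ≤ ENNReal.ofReal (exp (-l * ε)) *
          ENNReal.ofReal (mgf (fun ω => ∑ s ∈ range (n + 1), X s ω) μ l) := by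
        gcongr
        exact hmax.trans (ENNReal.ofReal_le_ofReal hM_int)
    _ = _ := (ENNReal.ofReal_mul (exp_pos _).le).symm

end ProbabilityTheory

open MeasureTheory ProbabilityTheory Finset in
theorem maximal_subgaussian_inequality_general
    {Ω : Type*} [MeasurableSpace Ω] (μ : Measure Ω) [IsProbabilityMeasure μ]
    (X : ℕ → Ω → ℝ)
    (hmeas : ∀ i, Measurable (X i))
    (hindep : iIndepFun X μ)
    (hcent : ∀ i, ∫ ω, X i ω ∂μ = 0)
    (hint : ∀ i, ∀ l : ℝ, Integrable (fun ω => Real.exp (l * X i ω)) μ)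
    (hsg : ∀ i, ∀ l : ℝ, ∫ ω, Real.exp (l * X i ω) ∂μ ≤ Real.exp (l ^ 2 / 2))
    (ε : ℝ) (hε : 0 < ε) (n : ℕ) :
    μ {ω | ∃ t, 1 ≤ t ∧ t ≤ n ∧ ε ≤ ∑ s ∈ range t, X s ω} ≤
      ENNReal.ofReal (Real.exp (-ε ^ 2 / (2 * n))) := by
  have hsubG : ∀ i, HasSubgaussianMGF (X i) 1 μ := fun i =>
    ⟨hint i, fun l => by simpa [mgf] using hsg i l⟩
  have hmgf : ∀ l i, 1 ≤ mgf (X i) μ l := fun l i =>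
    one_le_mgf_of_integral_eq_zero (hsubG i).integrable (hint i l) (hcent i)
  obtain _ | m := n
  · simp
  set l : ℝ := ε / (m + 1) with hl
  calc μ {ω | ∃ t, 1 ≤ t ∧ t ≤ m + 1 ∧ ε ≤ ∑ s ∈ range t, X s ω}
      ≤ μ {ω | ∃ t ≤ m, ε ≤ ∑ s ∈ range (t + 1), X s ω} := by
        refine measure_mono fun ω ⟨t, ht1, htm, hεt⟩ => ⟨t - 1, by omega, ?_⟩
        rwa [Nat.sub_add_cancel ht1]
    _ ≤ ENNReal.ofReal (exp (-l * ε) * mgf (fun ω => ∑ s ∈ range (m + 1), X s ω) μ l) :=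
        hindep.measure_exists_sum_range_succ_ge_le hmeas (hint · l) (hmgf l) (by positivity) ε m
    _ ≤ ENNReal.ofReal (exp (-l * ε) * exp ((m + 1) * l ^ 2 / 2)) := by
        gcongr
        simpa using (HasSubgaussianMGF.sum_of_iIndepFun hindep (s := range (m + 1))
          fun i _ => hsubG i).mgf_le l
    _ = ENNReal.ofReal (exp (-ε ^ 2 / (2 * ↑(m + 1)))) := by
        rw [← exp_add, hl]
        congr 2
        push_cast
        field_simp
        ring

open MeasureTheory ProbabilityTheory Finset in
/-- Maximal subgaussian tail inequality: for i.i.d. centered `1`-subgaussian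
random variables, `P(∃ t ≤ n, X₁ + ⋯ + X_t ≥ ε) ≤ exp(-ε²/(2n))`. -/
theorem maximal_subgaussian_inequality
    {Ω : Type*} [MeasurableSpace Ω] (μ : Measure Ω) [IsProbabilityMeasure μ]
    (X : ℕ → Ω → ℝ)
    (hmeas : ∀ i, Measurable (X i))
    (hindep : iIndepFun X μ)
    (hident : ∀ i, IdentDistrib (X i) (X 0) μ μ)
    (hcent : ∀ i, ∫ ω, X i ω ∂μ = 0)
    (hint : ∀ i, ∀ l : ℝ, Integrable (fun ω => Real.exp (l * X i ω)) μ)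
    (hsg : ∀ i, ∀ l : ℝ, ∫ ω, Real.exp (l * X i ω) ∂μ ≤ Real.exp (l ^ 2 / 2))
    (ε : ℝ) (hε : 0 < ε) (n : ℕ) (hn : 1 ≤ n) :
    μ {ω | ∃ t, 1 ≤ t ∧ t ≤ n ∧ ε ≤ ∑ s ∈ range t, X s ω} ≤
      ENNReal.ofReal (Real.exp (-ε ^ 2 / (2 * n))) :=
  maximal_subgaussian_inequality_general μ X hmeas hindep hcent hint hsg ε hε n
end

section
/- Let γ > 1 and for each k ∈ ℕ let δ_{γ^{k+1}} ∈ (0, 1/2] be given by δ_T = min{1/2, (c₆/n)·Σ_{i=1}^K min{u_i, T}} with constants c₆ > 0, n > 0 and fixed positive reals u₁, …, u_K. Fix Δ > 0, let u_Δ > 0, and set k* = min{k : γ^{k+1} ≥ u_Δ}. Then Σ_{k=0}^{k*−1} δ_{γ^{k+1}} ≤ (2γ·c₆ / (n(γ−1))) · Σ_{i=1}^K ( min{u_i, u_Δ} + 𝟙[u_i < u_Δ]·u_i·log₊(u_Δ/u_i) ), where log₊(x) = max{1, log x}. -/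
/-!
Bound `δ_T ≤ (c₆/n) ∑ᵢ min (uᵢ, T)` and swap the sums, so that it suffices to bound
`∑_{k < k*} min (a, γ^{k+1})` for a single `a = uᵢ`. The terms with `γ^{k+1} ≤ a` form a geometric
series dominated by `γ/(γ-1)` times its largest term, which is below `min (a, u_Δ)`. The terms with
`a < γ^{k+1} < u_Δ` each contribute `a`, and there are at most `1 + log (u_Δ/a) / log γ` of them;
`log γ ≥ 1 - 1/γ` turns this into `1 + γ/(γ-1) · log₊ (u_Δ/a)`.
-/

open Finset Real

section GeometricPowers

variable {γ : ℝ}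

lemma sum_range_pow_succ_le (hγ : 1 < γ) (N : ℕ) :
    ∑ k ∈ range N, γ ^ (k + 1) ≤ γ / (γ - 1) * γ ^ N := by
  have hγ1 : 0 < γ - 1 := by linarith
  have hsum : ∑ k ∈ range N, γ ^ (k + 1) = γ * ((γ ^ N - 1) / (γ - 1)) := by
    simp only [pow_succ', ← mul_sum, geom_sum_eq hγ.ne']
  rw [hsum, mul_div_assoc', div_mul_eq_mul_div, div_le_div_iff_of_pos_right hγ1]
  nlinarith

lemma sum_pow_succ_le_of_forall_le (hγ : 1 < γ) {M : ℝ} (hM : 0 ≤ M) {s : Finset ℕ}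
    (h : ∀ k ∈ s, γ ^ (k + 1) ≤ M) :
    ∑ k ∈ s, γ ^ (k + 1) ≤ γ / (γ - 1) * M := by
  have hc : 0 ≤ γ / (γ - 1) := div_nonneg (by linarith) (by linarith)
  rcases s.eq_empty_or_nonempty with rfl | hs
  · simpa using mul_nonneg hc hM
  have hsub : s ⊆ range (s.max' hs + 1) := fun k hk =>
    mem_range.2 (Nat.lt_succ_of_le (s.le_max' k hk))
  calc ∑ k ∈ s, γ ^ (k + 1)
      ≤ ∑ k ∈ range (s.max' hs + 1), γ ^ (k + 1) :=
        sum_le_sum_of_subset_of_nonneg hsub fun _ _ _ => by positivity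
    _ ≤ γ / (γ - 1) * γ ^ (s.max' hs + 1) := sum_range_pow_succ_le hγ _
    _ ≤ γ / (γ - 1) * M := mul_le_mul_of_nonneg_left (h _ (s.max'_mem hs)) hc

lemma pow_card_sub_one_mul_lt (hγ : 1 < γ) {a b : ℝ} (ha : 0 < a) {s : Finset ℕ}
    (hs : s.Nonempty) (h : ∀ k ∈ s, γ ^ (k + 1) ∈ Set.Ico a b) :
    γ ^ (#s - 1) * a < b := by
  set j := s.min' hs
  set m := s.max' hs
  have hjm : j ≤ m := s.min'_le m (s.max'_mem hs)
  have hcard : #s - 1 ≤ m - j := by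
    have hsub : s ⊆ Icc j m := fun k hk => mem_Icc.2 ⟨s.min'_le k hk, s.le_max' k hk⟩
    have := card_le_card hsub
    rw [Nat.card_Icc] at this
    omega
  calc γ ^ (#s - 1) * a
      ≤ γ ^ (m - j) * γ ^ (j + 1) :=
        mul_le_mul (pow_le_pow_right₀ hγ.le hcard) (h j (s.min'_mem hs)).1 ha.le (by positivity)
    _ = γ ^ (m + 1) := by rw [← pow_add]; congr 1; omega
    _ < b := (h m (s.max'_mem hs)).2

lemma card_le_one_add_mul_log (hγ : 1 < γ) {a b : ℝ} (ha : 0 < a) {s : Finset ℕ}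
    (h : ∀ k ∈ s, γ ^ (k + 1) ∈ Set.Ico a b) :
    (#s : ℝ) ≤ 1 + γ / (γ - 1) * max 1 (log (b / a)) := by
  have hγ0 : 0 < γ := by linarith
  have hγ1 : 0 < γ - 1 := by linarith
  rcases s.eq_empty_or_nonempty with rfl | hs
  · simp only [card_empty, Nat.cast_zero]
    have : 0 ≤ γ / (γ - 1) * max 1 (log (b / a)) :=
      mul_nonneg (by positivity) (le_max_of_le_left zero_le_one)
    linarith
  have hlog : ((#s : ℝ) - 1) * log γ ≤ log (b / a) := by
    have hlt := pow_card_sub_one_mul_lt hγ ha hs h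
    have := log_le_log (by positivity) ((le_div_iff₀ ha).2 hlt.le)
    rwa [log_pow, Nat.cast_pred (card_pos.2 hs)] at this
  have hd : 0 ≤ (#s : ℝ) - 1 := by
    have : (1 : ℝ) ≤ #s := by exact_mod_cast card_pos.2 hs
    linarith
  have hkey : ((#s : ℝ) - 1) * ((γ - 1) / γ) ≤ max 1 (log (b / a)) := by
    calc ((#s : ℝ) - 1) * ((γ - 1) / γ)
        = ((#s : ℝ) - 1) * (1 - γ⁻¹) := by field_simp
      _ ≤ ((#s : ℝ) - 1) * log γ := mul_le_mul_of_nonneg_left (one_sub_inv_le_log_of_pos hγ0) hd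
      _ ≤ max 1 (log (b / a)) := hlog.trans (le_max_right _ _)
  rw [div_mul_eq_mul_div, ← sub_le_iff_le_add', le_div_iff₀ hγ1]
  rw [mul_div_assoc', div_le_iff₀ hγ0] at hkey
  linarith

end GeometricPowers

lemma sum_range_min_pow_succ_le {γ a b : ℝ} {m : ℕ} (hγ : 1 < γ) (ha : 0 < a) (hb : 0 < b)
    (h : ∀ k < m, γ ^ (k + 1) < b) :
    ∑ k ∈ range m, min a (γ ^ (k + 1)) ≤
      2 * γ / (γ - 1) * (min a b + if a < b then a * max 1 (log (b / a)) else 0) := by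
  classical
  set c := γ / (γ - 1)
  have hc : 1 ≤ c := by rw [le_div_iff₀ (by linarith)]; linarith
  have hsplit : ∑ k ∈ range m, min a (γ ^ (k + 1)) =
      ∑ k ∈ range m with γ ^ (k + 1) ≤ a, γ ^ (k + 1) +
        #{k ∈ range m | ¬γ ^ (k + 1) ≤ a} * a := by
    simp only [min_comm a, min_def, sum_ite, sum_const, nsmul_eq_mul]
  have hsmall : ∑ k ∈ range m with γ ^ (k + 1) ≤ a, γ ^ (k + 1) ≤ c * min a b :=
    sum_pow_succ_le_of_forall_le hγ (le_min ha.le hb.le) fun k hk => by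
      rw [mem_filter, mem_range] at hk
      exact le_min hk.2 (h k hk.1).le
  rw [hsplit, show 2 * γ / (γ - 1) = 2 * c by ring]
  split_ifs with hab
  · have hlarge := card_le_one_add_mul_log hγ ha (s := {k ∈ range m | ¬γ ^ (k + 1) ≤ a})
      fun k hk => by
        rw [mem_filter, mem_range] at hk
        exact ⟨(not_le.1 hk.2).le, h k hk.1⟩
    rw [min_eq_left hab.le] at hsmall ⊢
    have hL : 0 ≤ c * a * max 1 (log (b / a)) :=
      mul_nonneg (by positivity) (le_max_of_le_left zero_le_one)
    nlinarith
  · have hlarge : {k ∈ range m | ¬γ ^ (k + 1) ≤ a} = ∅ :=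
      filter_eq_empty_iff.2 fun k hk => not_not.2 ((h k (mem_range.1 hk)).le.trans (not_lt.1 hab))
    have : 0 ≤ c * min a b := by positivity
    rw [hlarge, card_empty, Nat.cast_zero, zero_mul]
    linarith

open Finset in
theorem sum_delta_geometric_bound_general (γ c₆ n uΔ : ℝ) (K : ℕ) (u : ℕ → ℝ) (δ : ℝ → ℝ)
    (kstar : ℕ)
    (hγ : 1 < γ) (hc₆ : 0 < c₆) (hn : 0 < n) (huΔ : 0 < uΔ)
    (hu : ∀ i ∈ Icc 1 K, 0 < u i)
    (hδ : ∀ T : ℝ, δ T = min (1 / 2) ((c₆ / n) * ∑ i ∈ Icc 1 K, min (u i) T))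
    (hk₂ : ∀ k < kstar, γ ^ (k + 1) < uΔ) :
    ∑ k ∈ range kstar, δ (γ ^ (k + 1)) ≤
      (2 * γ * c₆ / (n * (γ - 1))) *
        ∑ i ∈ Icc 1 K,
          (min (u i) uΔ +
            (if u i < uΔ then u i * max 1 (Real.log (uΔ / u i)) else 0)) := by
  have hγ1 : γ - 1 ≠ 0 := by linarith
  calc ∑ k ∈ range kstar, δ (γ ^ (k + 1))
      ≤ ∑ k ∈ range kstar, c₆ / n * ∑ i ∈ Icc 1 K, min (u i) (γ ^ (k + 1)) :=
        sum_le_sum fun k _ => by rw [hδ]; exact min_le_right _ _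
    _ = c₆ / n * ∑ i ∈ Icc 1 K, ∑ k ∈ range kstar, min (u i) (γ ^ (k + 1)) := by
        rw [← mul_sum, sum_comm]
    _ ≤ c₆ / n * ∑ i ∈ Icc 1 K, 2 * γ / (γ - 1) *
          (min (u i) uΔ + if u i < uΔ then u i * max 1 (log (uΔ / u i)) else 0) := by
        gcongr with i hi
        exact sum_range_min_pow_succ_le hγ (hu i hi) huΔ hk₂
    _ = _ := by
        rw [← mul_sum, ← mul_assoc]
        congr 1
        field_simp

open Finset in
/-- Lemma 3 of the paper (core computation): a geometric sum of the failure
probabilities `δ_{γ^{k+1}}` for `k < k*` is bounded in terms of the truncated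
pull-count quantities, where `log₊ x = max 1 (log x)`. -/
theorem sum_delta_geometric_bound (γ c₆ n uΔ : ℝ) (K : ℕ) (u : ℕ → ℝ) (δ : ℝ → ℝ)
    (kstar : ℕ)
    (hγ : 1 < γ) (hc₆ : 0 < c₆) (hn : 0 < n) (huΔ : 0 < uΔ)
    (hu : ∀ i ∈ Icc 1 K, 0 < u i)
    (hδ : ∀ T : ℝ, δ T = min (1 / 2) ((c₆ / n) * ∑ i ∈ Icc 1 K, min (u i) T))
    (hk₁ : uΔ ≤ γ ^ (kstar + 1))
    (hk₂ : ∀ k < kstar, γ ^ (k + 1) < uΔ) :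
    ∑ k ∈ range kstar, δ (γ ^ (k + 1)) ≤
      (2 * γ * c₆ / (n * (γ - 1))) *
        ∑ i ∈ Icc 1 K,
          (min (u i) uΔ +
            (if u i < uΔ then u i * max 1 (Real.log (uΔ / u i)) else 0)) :=
  sum_delta_geometric_bound_general γ c₆ n uΔ K u δ kstar hγ hc₆ hn huΔ hu hδ hk₂
end

section
/- Let Δ_i > 0, c₉ > 0, c₁₀ ≥ 1, and suppose u_Δ = (c₉/Δ²)·log(c₁₀/δ_Δ) where δ_Δ ∈ (0,1) satisfies δ_{Δ_i}/δ_Δ ≤ Δ²/Δ_i² for all Δ ≥ Δ_i. Then ∫_{Δ_i}^∞ u_Δ dΔ ≤ (c₉/Δ_i)·(2 + log(c₁₀/δ_{Δ_i})). -/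
open MeasureTheory Set Filter Real Topology

/-!
The growth condition gives `log (c₁₀ / δ Δ) ≤ log (c₁₀ / δ Δi) + 2 log (Δ / Δi)` for `Δ ≥ Δi`, so
the integrand is dominated by `c₉ (log (c₁₀ / δ Δi) + 2 log (Δ / Δi)) / Δ²`, whose integral over
`(Δi, ∞)` is computed from the antiderivatives `-1/Δ` of `1/Δ²` and `-(1 + log (Δ / Δi))/Δ` of
`log (Δ / Δi) / Δ²`. The integrand is nonnegative, so this domination bounds its integral without
knowing that it is measurable.
-/

section TailIntegrals

variable {a : ℝ}

lemma integrableOn_Ioi_inv_sq (ha : 0 < a) : IntegrableOn (fun x : ℝ => (x ^ 2)⁻¹) (Ioi a) :=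
  integrableOn_Ioi_deriv_of_nonneg' (g := fun x => -x⁻¹)
    (fun x hx => (hasDerivAt_inv (ha.trans_le hx).ne').neg.congr_deriv (neg_neg _))
    (fun x _ => by positivity) (by simpa using tendsto_inv_atTop_zero.neg)

lemma integral_Ioi_inv_sq (ha : 0 < a) : ∫ x in Ioi a, (x ^ 2)⁻¹ = a⁻¹ := by
  rw [integral_Ioi_of_hasDerivAt_of_nonneg' (g := fun x => -x⁻¹)
    (fun x hx => (hasDerivAt_inv (ha.trans_le hx).ne').neg.congr_deriv (neg_neg _))
    (fun x _ => by positivity) (by simpa using tendsto_inv_atTop_zero.neg)]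
  ring

lemma hasDerivAt_neg_one_add_log_div_div (ha : a ≠ 0) {x : ℝ} (hx : x ≠ 0) :
    HasDerivAt (fun y => -(1 + log (y / a)) / y) (log (x / a) / x ^ 2) x := by
  have hlog : HasDerivAt (fun y => log (y / a)) x⁻¹ x := by
    refine (((hasDerivAt_id' x).div_const a).log (div_ne_zero hx ha)).congr_deriv ?_
    field_simp
  refine ((hlog.const_add 1).neg.div (hasDerivAt_id' x) hx).congr_deriv ?_
  simp only [Pi.neg_apply]
  field_simp
  ring

lemma tendsto_neg_one_add_log_div_div_atTop (ha : 0 < a) :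
    Tendsto (fun y => -(1 + log (y / a)) / y) atTop (𝓝 0) := by
  have hlog : Tendsto (fun y => log (y / a) / y) atTop (𝓝 0) := by
    have := (tendsto_pow_log_div_mul_add_atTop a 0 1 ha.ne').comp
      (tendsto_id.atTop_div_const ha)
    refine this.congr' ?_
    filter_upwards with y
    simp [mul_div_cancel₀ _ ha.ne']
  simpa [add_div, neg_div] using (tendsto_inv_atTop_zero.add hlog).neg

lemma log_div_div_sq_nonneg (ha : 0 < a) {x : ℝ} (hx : a ≤ x) : 0 ≤ log (x / a) / x ^ 2 :=
  div_nonneg (log_nonneg ((one_le_div ha).2 hx)) (sq_nonneg x)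

lemma integrableOn_Ioi_log_div_div_sq (ha : 0 < a) :
    IntegrableOn (fun x => log (x / a) / x ^ 2) (Ioi a) :=
  integrableOn_Ioi_deriv_of_nonneg'
    (fun _ hx => hasDerivAt_neg_one_add_log_div_div ha.ne' (ha.trans_le hx).ne')
    (fun _ hx => log_div_div_sq_nonneg ha hx.le) (tendsto_neg_one_add_log_div_div_atTop ha)

lemma integral_Ioi_log_div_div_sq (ha : 0 < a) : ∫ x in Ioi a, log (x / a) / x ^ 2 = a⁻¹ := by
  rw [integral_Ioi_of_hasDerivAt_of_nonneg'
    (fun _ hx => hasDerivAt_neg_one_add_log_div_div ha.ne' (ha.trans_le hx).ne')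
    (fun _ hx => log_div_div_sq_nonneg ha hx.le) (tendsto_neg_one_add_log_div_div_atTop ha),
    div_self ha.ne', log_one]
  ring

end TailIntegrals

lemma log_div_le_log_div_add_two_mul_log {C s t x a : ℝ} (hC : C ≠ 0) (hs : 0 < s) (ht : 0 < t)
    (h : s / t ≤ x ^ 2 / a ^ 2) : log (C / t) ≤ log (C / s) + 2 * log (x / a) := by
  have hst : log s - log t ≤ 2 * log (x / a) :=
    calc log s - log t = log (s / t) := (log_div hs.ne' ht.ne').symm
      _ ≤ log ((x / a) ^ 2) := log_le_log (div_pos hs ht) (by rwa [div_pow])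
      _ = 2 * log (x / a) := by rw [log_pow]; norm_num
  rw [log_div hC ht.ne', log_div hC hs.ne']
  linarith

/-- First half of Lemma 12: `∫_{Δi}^∞ u_Δ dΔ ≤ (c₉/Δi) (2 + log (c₁₀/δ_{Δi}))` where
`u_Δ = (c₉/Δ²) log (c₁₀/δ_Δ)` and `δ_{Δi}/δ_Δ ≤ Δ²/Δi²` for `Δ ≥ Δi`. -/
theorem integral_u_tail_bound (Δi c₉ c₁₀ : ℝ) (δ : ℝ → ℝ)
    (hΔi : 0 < Δi) (hc₉ : 0 < c₉) (hc₁₀ : 1 ≤ c₁₀)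
    (hδ : ∀ Δ : ℝ, Δi ≤ Δ → 0 < δ Δ ∧ δ Δ < 1 ∧ δ Δi / δ Δ ≤ Δ ^ 2 / Δi ^ 2) :
    ∫ Δ in Set.Ioi Δi, (c₉ / Δ ^ 2) * Real.log (c₁₀ / δ Δ) ≤
      (c₉ / Δi) * (2 + Real.log (c₁₀ / δ Δi)) := by
  set L := log (c₁₀ / δ Δi)
  have hinv := integrableOn_Ioi_inv_sq hΔi
  have hlog := integrableOn_Ioi_log_div_div_sq hΔi
  have hnonneg : ∀ Δ ∈ Ioi Δi, 0 ≤ c₉ / Δ ^ 2 * log (c₁₀ / δ Δ) := fun Δ hΔ => by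
    obtain ⟨hδ0, hδ1, -⟩ := hδ Δ hΔ.le
    have : 0 ≤ log (c₁₀ / δ Δ) := log_nonneg ((one_le_div hδ0).2 (by linarith))
    positivity
  have hbound : ∀ Δ ∈ Ioi Δi, c₉ / Δ ^ 2 * log (c₁₀ / δ Δ) ≤
      c₉ * (L * (Δ ^ 2)⁻¹ + 2 * (log (Δ / Δi) / Δ ^ 2)) := fun Δ hΔ => by
    obtain ⟨hδ0, -, hratio⟩ := hδ Δ hΔ.le
    have := log_div_le_log_div_add_two_mul_log (zero_lt_one.trans_le hc₁₀).ne'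
      (hδ Δi le_rfl).1 hδ0 hratio
    calc c₉ / Δ ^ 2 * log (c₁₀ / δ Δ) ≤ c₉ / Δ ^ 2 * (L + 2 * log (Δ / Δi)) := by gcongr
      _ = _ := by ring
  calc ∫ Δ in Ioi Δi, c₉ / Δ ^ 2 * log (c₁₀ / δ Δ)
      ≤ ∫ Δ in Ioi Δi, c₉ * (L * (Δ ^ 2)⁻¹ + 2 * (log (Δ / Δi) / Δ ^ 2)) :=
        integral_mono_of_nonneg (ae_restrict_of_forall_mem measurableSet_Ioi hnonneg)
          (((hinv.const_mul L).add (hlog.const_mul 2)).const_mul c₉)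
          (ae_restrict_of_forall_mem measurableSet_Ioi hbound)
    _ = c₉ / Δi * (2 + L) := by
      rw [integral_const_mul, integral_add (hinv.const_mul L) (hlog.const_mul 2),
        integral_const_mul, integral_const_mul, integral_Ioi_inv_sq hΔi,
        integral_Ioi_log_div_div_sq hΔi]
      ring
end

section
/- Let u₁ ≥ u₂ ≥ ⋯ ≥ u_K > 0 be nonincreasing, and let S ⊆ {1,…,K} with 1 ∈ S be such that for every k ≥ 0 the dyadic block S_k = {2^k, …, min{K, 2^{k+1} − 1}} satisfies |S_k \ S| ≤ 2^{k−1}. Then for every T > 0, Σ_{i ∈ S} min{u_i, T} ≥ (1/5) · Σ_{i=1}^K min{u_i, T}. -/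
/-!
Cut `{1, …, K}` into the dyadic blocks `B k = [2^k, 2^(k+1))`. If `B (k+1)` meets `{1, …, K}`,
then `B k` lies entirely inside it, so `B k ∩ S` has at least `2^(k-1)` elements, while at most
`2^k` elements of `B (k+1)` lie outside `S`. As `v = min u T` is nonnegative and nonincreasing,
each of the latter is bounded by each of the former, so the part of block `k+1` outside `S`
weighs at most twice the part of block `k` inside `S`. Summing over the blocks gives
`∑ v ≤ 3 ∑_S v`, which is better than the factor `5` claimed.
-/

open Finset

def dyadicBlock (K k : ℕ) : Finset ℕ := Icc (2 ^ k) (min K (2 ^ (k + 1) - 1))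

section

variable {K k : ℕ}

lemma mem_dyadicBlock {i : ℕ} :
    i ∈ dyadicBlock K k ↔ 2 ^ k ≤ i ∧ i ≤ K ∧ i < 2 ^ (k + 1) := by
  have := Nat.one_le_two_pow (n := k + 1)
  simp only [dyadicBlock, mem_Icc, le_min_iff]
  omega

lemma dyadicBlock_eq_filter_log :
    dyadicBlock K k = (Icc 1 K).filter (fun i => Nat.log 2 i = k) := by
  ext i
  rw [mem_dyadicBlock, mem_filter, mem_Icc]
  constructor
  · rintro ⟨hlo, hK, hhi⟩
    have hi : i ≠ 0 := (Nat.two_pow_pos k).trans_le hlo |>.ne'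
    exact ⟨⟨by omega, hK⟩, (Nat.log_eq_iff (.inr ⟨one_lt_two, hi⟩)).2 ⟨hlo, hhi⟩⟩
  · rintro ⟨⟨h1, hK⟩, rfl⟩
    have hi : i ≠ 0 := by omega
    exact ⟨Nat.pow_log_le_self 2 hi, hK, Nat.lt_pow_succ_log_self one_lt_two i⟩

lemma dyadicBlock_subset_Icc : dyadicBlock K k ⊆ Icc 1 K := by
  rw [dyadicBlock_eq_filter_log]
  exact filter_subset _ _

lemma dyadicBlock_zero (hK : 1 ≤ K) : dyadicBlock K 0 = {1} := by
  simp [dyadicBlock, min_eq_right hK]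

lemma card_dyadicBlock_of_two_pow_succ_le (h : 2 ^ (k + 1) ≤ K) : #(dyadicBlock K k) = 2 ^ k := by
  rw [dyadicBlock, min_eq_right (by omega), Nat.card_Icc, pow_succ]
  have := Nat.one_le_two_pow (n := k)
  omega

end

lemma sum_eq_sum_range_sum_dyadicBlock_filter {M : Type*} [AddCommMonoid M] {K : ℕ}
    {s : Finset ℕ} (hs : s ⊆ Icc 1 K) (f : ℕ → M) :
    ∑ i ∈ s, f i = ∑ k ∈ range K, ∑ i ∈ (dyadicBlock K k).filter (· ∈ s), f i := by
  have hlog : ∀ i ∈ s, Nat.log 2 i ∈ range K := fun i hi => by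
    have := mem_Icc.1 (hs hi)
    exact mem_range.2 ((Nat.log_lt_self 2 (by omega)).trans_le this.2)
  rw [← sum_fiberwise_of_maps_to hlog]
  refine sum_congr rfl fun k _ => sum_congr ?_ fun _ _ => rfl
  ext i
  simp only [dyadicBlock_eq_filter_log, mem_filter]
  have := @hs i
  tauto

lemma sum_Icc_eq_sum_range_sum_dyadicBlock {M : Type*} [AddCommMonoid M] (K : ℕ) (f : ℕ → M) :
    ∑ i ∈ Icc 1 K, f i = ∑ k ∈ range K, ∑ i ∈ dyadicBlock K k, f i := by
  rw [sum_eq_sum_range_sum_dyadicBlock_filter subset_rfl]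
  refine sum_congr rfl fun k _ => ?_
  rw [filter_true_of_mem fun i hi => dyadicBlock_subset_Icc hi]

lemma sum_le_nsmul_sum_of_forall_le_of_forall_le {ι M : Type*} [AddCommMonoid M] [PartialOrder M]
    [IsOrderedAddMonoid M] {s t : Finset ι} {f : ι → M} {c : M} {m : ℕ} (hc : 0 ≤ c)
    (hs : ∀ i ∈ s, f i ≤ c) (ht : ∀ j ∈ t, c ≤ f j) (hcard : #s ≤ m * #t) :
    ∑ i ∈ s, f i ≤ m • ∑ j ∈ t, f j :=
  calc ∑ i ∈ s, f i ≤ #s • c := sum_le_card_nsmul s f c hs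
    _ ≤ (m * #t) • c := nsmul_le_nsmul_left hc hcard
    _ = m • (#t • c) := mul_nsmul' c m #t
    _ ≤ m • ∑ j ∈ t, f j := nsmul_le_nsmul_right (card_nsmul_le_sum t f c ht) m

lemma sum_range_le_three_nsmul_sum_range {M : Type*} [AddCommMonoid M] [PartialOrder M]
    [IsOrderedAddMonoid M] {a b : ℕ → M} (hb : ∀ k, 0 ≤ b k) (h0 : a 0 ≤ b 0)
    (hsucc : ∀ k, a (k + 1) ≤ b (k + 1) + 2 • b k) (n : ℕ) :
    ∑ k ∈ range n, a k ≤ 3 • ∑ k ∈ range n, b k := by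
  -- keep `2 • b n` in reserve to pay for the next block
  suffices h :
      ∀ n, ∑ k ∈ range (n + 1), a k + 2 • b n ≤ 3 • ∑ k ∈ range (n + 1), b k by
    cases n with
    | zero => simp
    | succ n => exact (le_add_of_nonneg_right (nsmul_nonneg (hb n) 2)).trans (h n)
  intro n
  induction n with
  | zero =>
    calc ∑ k ∈ range 1, a k + 2 • b 0 ≤ b 0 + 2 • b 0 := by rw [sum_range_one]; gcongr
      _ = 3 • ∑ k ∈ range 1, b k := by rw [sum_range_one]; abel
  | succ n ih =>
    calc ∑ k ∈ range (n + 2), a k + 2 • b (n + 1)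
        ≤ ∑ k ∈ range (n + 1), a k + (b (n + 1) + 2 • b n) + 2 • b (n + 1) := by
          rw [sum_range_succ _ (n + 1)]
          gcongr
          exact hsucc n
      _ = ∑ k ∈ range (n + 1), a k + 2 • b n + 3 • b (n + 1) := by abel
      _ ≤ 3 • ∑ k ∈ range (n + 2), b k := by
          rw [sum_range_succ _ (n + 1), nsmul_add]
          gcongr

lemma two_mul_le_two_pow_iff_le_two_rpow_sub_one {n k : ℕ} :
    2 * n ≤ 2 ^ k ↔ (n : ℝ) ≤ (2 : ℝ) ^ ((k : ℝ) - 1) := by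
  rw [Real.rpow_sub two_pos, Real.rpow_natCast, Real.rpow_one, le_div_iff₀ two_pos, mul_comm]
  norm_cast

section

variable {M : Type*} [AddCommMonoid M] [PartialOrder M] [IsOrderedAddMonoid M]
  {K : ℕ} {S : Finset ℕ} {v : ℕ → M}

lemma sum_filter_notMem_dyadicBlock_succ_le (hv0 : ∀ i ∈ Icc 1 K, 0 ≤ v i)
    (hv : AntitoneOn v (Set.Icc 1 K))
    (hbad : ∀ k, 2 * #((dyadicBlock K k).filter (· ∉ S)) ≤ 2 ^ k) (k : ℕ) :
    ∑ i ∈ (dyadicBlock K (k + 1)).filter (· ∉ S), v i ≤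
      2 • ∑ i ∈ (dyadicBlock K k).filter (· ∈ S), v i := by
  by_cases hk : 2 ^ (k + 1) ≤ K
  · have hmem : 2 ^ (k + 1) ∈ Set.Icc 1 K := ⟨Nat.one_le_two_pow, hk⟩
    refine sum_le_nsmul_sum_of_forall_le_of_forall_le (c := v (2 ^ (k + 1)))
      (hv0 _ (mem_Icc.2 hmem)) (fun i hi => ?_) (fun j hj => ?_) ?_
    · obtain ⟨hlo, hK, -⟩ := mem_dyadicBlock.1 (mem_filter.1 hi).1
      exact hv hmem ⟨Nat.one_le_two_pow.trans hlo, hK⟩ hlo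
    · obtain ⟨hlo, hK, hhi⟩ := mem_dyadicBlock.1 (mem_filter.1 hj).1
      exact hv ⟨Nat.one_le_two_pow.trans hlo, hK⟩ hmem hhi.le
    · have hsplit := card_filter_add_card_filter_not (s := dyadicBlock K k) (· ∈ S)
      rw [card_dyadicBlock_of_two_pow_succ_le hk] at hsplit
      have := hbad k
      have := hbad (k + 1)
      rw [pow_succ] at this
      omega
  · have hempty : (dyadicBlock K (k + 1)).filter (· ∉ S) = ∅ :=
      filter_eq_empty_iff.2 fun i hi => absurd (by have := mem_dyadicBlock.1 hi; omega) hk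
    rw [hempty, sum_empty]
    exact nsmul_nonneg (sum_nonneg fun i hi =>
      hv0 i (dyadicBlock_subset_Icc (mem_filter.1 hi).1)) 2

theorem sum_Icc_le_three_nsmul_sum (hv0 : ∀ i ∈ Icc 1 K, 0 ≤ v i)
    (hv : AntitoneOn v (Set.Icc 1 K)) (hS : S ⊆ Icc 1 K) (h1 : 1 ∈ S)
    (hbad : ∀ k, 2 * #((dyadicBlock K k).filter (· ∉ S)) ≤ 2 ^ k) :
    ∑ i ∈ Icc 1 K, v i ≤ 3 • ∑ i ∈ S, v i := by
  have hK : 1 ≤ K := (mem_Icc.1 (hS h1)).2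
  rw [sum_Icc_eq_sum_range_sum_dyadicBlock, sum_eq_sum_range_sum_dyadicBlock_filter hS]
  refine sum_range_le_three_nsmul_sum_range
    (fun k => sum_nonneg fun i hi => hv0 i (dyadicBlock_subset_Icc (mem_filter.1 hi).1))
    (by rw [dyadicBlock_zero hK, filter_singleton, if_pos h1]) (fun k => ?_) K
  rw [← sum_filter_add_sum_filter_not (dyadicBlock K (k + 1)) (· ∈ S)]
  gcongr
  exact sum_filter_notMem_dyadicBlock_succ_le hv0 hv hbad k

end

theorem good_arms_truncated_sum_lower_general (K : ℕ) (u : ℕ → ℝ) (S : Finset ℕ)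
    (hupos : ∀ i ∈ Icc 1 K, 0 < u i)
    (humono : ∀ i ∈ Icc 1 K, ∀ j ∈ Icc 1 K, i ≤ j → u j ≤ u i)
    (hS : S ⊆ Icc 1 K) (h1 : 1 ∈ S)
    (hblock : ∀ k : ℕ,
      ((((Icc (2 ^ k) (min K (2 ^ (k + 1) - 1))).filter (fun i => i ∉ S)).card : ℝ)) ≤
        (2 : ℝ) ^ ((k : ℝ) - 1)) :
    ∀ T : ℝ, 0 < T →
      (1 / 5) * ∑ i ∈ Icc 1 K, min (u i) T ≤ ∑ i ∈ S, min (u i) T := by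
  intro T hT
  have hv0 : ∀ i ∈ Icc 1 K, 0 ≤ min (u i) T := fun i hi => (lt_min (hupos i hi) hT).le
  have hv : AntitoneOn (fun i => min (u i) T) (Set.Icc 1 K) := fun i hi j hj hij =>
    min_le_min_right T (humono i (mem_Icc.2 hi) j (mem_Icc.2 hj) hij)
  have hthree := sum_Icc_le_three_nsmul_sum hv0 hv hS h1
    fun k => two_mul_le_two_pow_iff_le_two_rpow_sub_one.2 (hblock k)
  rw [nsmul_eq_mul] at hthree
  have := sum_nonneg hv0
  push_cast at hthree
  linarith

open Finset in
/-- Deterministic core of Lemma 7: if the set `S` of good arms contains arm `1`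
and misses at most `2^{k-1}` elements of each dyadic block
`S_k = {2^k, …, min{K, 2^{k+1}-1}}`, then for every `T > 0` the truncated sum
over `S` is at least a fifth of the full truncated sum. -/
theorem good_arms_truncated_sum_lower (K : ℕ) (u : ℕ → ℝ) (S : Finset ℕ)
    (hK : 1 ≤ K)
    (hupos : ∀ i ∈ Icc 1 K, 0 < u i)
    (humono : ∀ i ∈ Icc 1 K, ∀ j ∈ Icc 1 K, i ≤ j → u j ≤ u i)
    (hS : S ⊆ Icc 1 K) (h1 : 1 ∈ S)
    (hblock : ∀ k : ℕ,
      ((((Icc (2 ^ k) (min K (2 ^ (k + 1) - 1))).filter (fun i => i ∉ S)).card : ℝ)) ≤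
        (2 : ℝ) ^ ((k : ℝ) - 1)) :
    ∀ T : ℝ, 0 < T →
      (1 / 5) * ∑ i ∈ Icc 1 K, min (u i) T ≤ ∑ i ∈ S, min (u i) T :=
  good_arms_truncated_sum_lower_general K u S hupos humono hS h1 hblock
end

section
/- Let K ≥ 2, n ≥ K, C > 0, and Δ₂, …, Δ_K ∈ (0, 1]. Define H_i = Σ_{j=1}^K min{1/Δ_i², 1/Δ_j²} (with Δ₁ := 0 contributing min{1/Δ_i², ∞} = 1/Δ_i²). Then √(Kn) + Σ_{i : Δ_i > √(K/n)} (C/Δ_i)·log₊(n/H_i) ≤ (1 + C·c)·√(Kn) for some universal constant c, i.e. Σ_{i : Δ_i > √(K/n)} (1/Δ_i)·log₊(n/H_i) = O(√(Kn)). -/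
/-!
By `log y ≤ 2√y`, the term of arm `i` is at most `1/Δ_i + 2√(n / (Δ_i² H_i))`. The first part is
below `√(n/K)` because `Δ_i > √(K/n)`, which gives `√(Kn)` over at most `K` arms. For the second,
let `r_i` be the number of selected arms whose gap is at most `Δ_i`: each of them, like the optimal
arm, contributes `1/Δ_i²` to `H_i`, so `Δ_i² H_i ≥ 1 + r_i`. Sorted, the ranks `r_i` dominate
`1, 2, …`, hence the second parts sum to at most `2√n · Σ_{r=1}^{K-1} 1/√(1 + r) ≤ 4√(Kn)`.
-/

open Finset Real

theorem Finset.sum_card_filter_le_le_sum_Icc_of_antitone {ι α M : Type*} [LinearOrder α]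
    [AddCommMonoid M] [PartialOrder M] [IsOrderedAddMonoid M]
    (s : Finset ι) (g : ι → α) {f : ℕ → M} (hf : Antitone f) :
    ∑ i ∈ s, f #{j ∈ s | g j ≤ g i} ≤ ∑ k ∈ Icc 1 #s, f k := by
  classical
  induction s using Finset.induction_on_max_value g with
  | empty => simp
  | insert a s ha hmax ih =>
    have hrank_a : #{j ∈ insert a s | g j ≤ g a} = #s + 1 := by
      rw [filter_true_of_mem fun j hj => ?_, card_insert_of_notMem ha]
      rcases mem_insert.mp hj with rfl | hj
      exacts [le_rfl, hmax j hj]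
    have hrank_s : ∑ i ∈ s, f #{j ∈ insert a s | g j ≤ g i} ≤ ∑ i ∈ s, f #{j ∈ s | g j ≤ g i} :=
      sum_le_sum fun i _ => hf <| card_le_card <| filter_subset_filter _ <| subset_insert a s
    rw [sum_insert ha, hrank_a, card_insert_of_notMem ha, sum_Icc_succ_top (by omega), add_comm]
    exact add_le_add_left (hrank_s.trans ih) _

theorem sum_Icc_inv_sqrt_one_add_le (m : ℕ) :
    ∑ k ∈ Icc 1 m, (√(1 + k))⁻¹ ≤ 2 * √(m + 1) := by
  induction m with
  | zero => simp
  | succ m ih =>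
    rw [sum_Icc_succ_top (by omega)]
    push_cast
    -- `2 (√(x+1) - √x) = 2 / (√(x+1) + √x) ≥ 1 / √(x+1)`
    have hstep : (√(1 + (m + 1 : ℝ)))⁻¹ ≤ 2 * √(m + 1 + 1) - 2 * √(m + 1) := by
      have ha := sq_sqrt (by positivity : (0:ℝ) ≤ m + 1)
      have hb := sq_sqrt (by positivity : (0:ℝ) ≤ m + 1 + 1)
      rw [add_comm (1:ℝ), inv_le_iff_one_le_mul₀ (by positivity)]
      nlinarith [sq_nonneg (√(m + 1 + 1 : ℝ) - √(m + 1)), sqrt_nonneg (m + 1 : ℝ)]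
    linarith

theorem Real.log_le_two_mul_sqrt {y : ℝ} (hy : 0 ≤ y) : log y ≤ 2 * √y := by
  have := log_le_self (sqrt_nonneg y)
  rw [log_sqrt hy] at this
  linarith

theorem inv_mul_max_one_log_div_le {Δ H n r : ℝ} (hΔ : 0 < Δ) (hn : 0 ≤ n) (hr : 0 ≤ r)
    (hH : 1 + r ≤ Δ ^ 2 * H) :
    Δ⁻¹ * max 1 (log (n / H)) ≤ Δ⁻¹ + 2 * √n * (√(1 + r))⁻¹ := by
  have hH0 : 0 < H := pos_of_mul_pos_right (hH.trans_lt' (by positivity)) (sq_nonneg Δ)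
  have hlog : max 1 (log (n / H)) ≤ 1 + 2 * √(n / H) :=
    max_le (by linarith [sqrt_nonneg (n / H)])
      ((log_le_two_mul_sqrt (by positivity)).trans (by linarith))
  have hsqrt : Δ⁻¹ * √(n / H) ≤ √n * (√(1 + r))⁻¹ :=
    calc Δ⁻¹ * √(n / H) = √(n / (Δ ^ 2 * H)) := by
          rw [mul_comm (Δ ^ 2), ← div_div, sqrt_div' (n / H) (sq_nonneg Δ), sqrt_sq hΔ.le,
            inv_mul_eq_div]
      _ ≤ √(n / (1 + r)) := by gcongr
      _ = √n * (√(1 + r))⁻¹ := by rw [sqrt_div' n (by positivity), div_eq_mul_inv]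
  calc Δ⁻¹ * max 1 (log (n / H)) ≤ Δ⁻¹ * (1 + 2 * √(n / H)) := by gcongr
    _ ≤ Δ⁻¹ + 2 * √n * (√(1 + r))⁻¹ := by linarith

theorem card_filter_le_div_sq_le_sum_min {ι : Type*} {s t : Finset ι} (hts : t ⊆ s) {Δ : ι → ℝ}
    (hΔ : ∀ j ∈ t, 0 < Δ j) (i : ι) :
    #{j ∈ t | Δ j ≤ Δ i} / Δ i ^ 2 ≤ ∑ j ∈ s, min (1 / Δ i ^ 2) (1 / Δ j ^ 2) := by
  classical
  calc (#{j ∈ t | Δ j ≤ Δ i} : ℝ) / Δ i ^ 2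
      = ∑ j ∈ t with Δ j ≤ Δ i, min (1 / Δ i ^ 2) (1 / Δ j ^ 2) := by
        rw [sum_congr rfl fun j hj => ?_, sum_const, nsmul_eq_mul, mul_one_div]
        obtain ⟨hjt, hji⟩ := mem_filter.mp hj
        have := hΔ j hjt
        exact min_eq_left (one_div_le_one_div_of_le (by positivity) (by gcongr))
    _ ≤ ∑ j ∈ s, min (1 / Δ i ^ 2) (1 / Δ j ^ 2) :=
        sum_le_sum_of_subset_of_nonneg ((filter_subset _ _).trans hts) fun j _ _ => by positivity

/-- The computation converting Theorem 1 into Theorem 2: there is a universal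
constant `c` such that for all `K ≥ 2`, `n ≥ K`, `C > 0` and gaps
`Δ i ∈ (0,1]`, the problem-dependent bound summed over arms with
`Δ i > √(K/n)` is `O(√(Kn))`. -/
theorem worst_case_sum_bound :
    ∃ c : ℝ, 0 < c ∧
      ∀ (K n : ℕ) (C : ℝ) (Δ H : ℕ → ℝ),
        2 ≤ K → K ≤ n → 0 < C →
        (∀ i ∈ Icc 2 K, 0 < Δ i ∧ Δ i ≤ 1) →
        (∀ i ∈ Icc 2 K,
          H i = 1 / (Δ i) ^ 2 + ∑ j ∈ Icc 2 K, min (1 / (Δ i) ^ 2) (1 / (Δ j) ^ 2)) →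
        Real.sqrt (K * n) +
            ∑ i ∈ (Icc 2 K).filter (fun i => Real.sqrt ((K : ℝ) / n) < Δ i),
              (C / Δ i) * max 1 (Real.log (n / H i)) ≤
          (1 + C * c) * Real.sqrt (K * n) := by
  refine ⟨5, by norm_num, fun K n C Δ H hK hKn hC hΔ hH => ?_⟩
  set S := (Icc 2 K).filter (fun i => √((K : ℝ) / n) < Δ i)
  have hK0 : (0 : ℝ) < K := by exact_mod_cast (by omega : 0 < K)
  have hn0 : (0 : ℝ) < n := by exact_mod_cast (by omega : 0 < n)
  have hcard : #S + 1 ≤ K := by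
    have : #S ≤ #(Icc 2 K) := card_filter_le _ _
    rw [Nat.card_Icc] at this
    omega
  have hterm : ∀ i ∈ S, C / Δ i * max 1 (log (n / H i)) ≤
      C * (√(n / K) + 2 * √n * (√(1 + #{j ∈ S | Δ j ≤ Δ i}))⁻¹) := by
    intro i hi
    obtain ⟨hiK, hgap⟩ := mem_filter.mp hi
    have hΔi := (hΔ i hiK).1
    have hrank : 1 + (#{j ∈ S | Δ j ≤ Δ i} : ℝ) ≤ Δ i ^ 2 * H i := by
      have := card_filter_le_div_sq_le_sum_min (t := S) (filter_subset _ _)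
        (fun j hj => (hΔ j (mem_filter.mp hj).1).1) i
      rw [hH i hiK, ← div_le_iff₀' (by positivity), add_div]
      linarith
    have hinv : (Δ i)⁻¹ ≤ √(n / K) := by
      rw [← inv_div, sqrt_inv]
      exact inv_anti₀ (by positivity) hgap.le
    rw [div_eq_mul_inv, mul_assoc]
    gcongr
    exact (inv_mul_max_one_log_div_le hΔi hn0.le (by positivity) hrank).trans (by gcongr)
  have hranks : ∑ i ∈ S, (√(1 + #{j ∈ S | Δ j ≤ Δ i}))⁻¹ ≤ 2 * √K :=
    calc _ ≤ ∑ k ∈ Icc 1 #S, (√(1 + k))⁻¹ :=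
          S.sum_card_filter_le_le_sum_Icc_of_antitone Δ fun a b hab =>
            inv_anti₀ (by positivity) (sqrt_le_sqrt (by gcongr))
      _ ≤ 2 * √(#S + 1) := sum_Icc_inv_sqrt_one_add_le _
      _ ≤ 2 * √K := by gcongr; exact_mod_cast hcard
  have hKsqrt : (K : ℝ) * √(n / K) = √(K * n) := by
    rw [sqrt_div hn0.le, mul_div_left_comm, div_sqrt, sqrt_mul hK0.le, mul_comm]
  calc √(K * n) + ∑ i ∈ S, C / Δ i * max 1 (log (n / H i))
      ≤ √(K * n) + ∑ i ∈ S, C * (√(n / K) + 2 * √n * (√(1 + #{j ∈ S | Δ j ≤ Δ i}))⁻¹) :=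
        add_le_add_right (sum_le_sum hterm) _
    _ = √(K * n) + C * (#S * √(n / K) + 2 * √n * ∑ i ∈ S, (√(1 + #{j ∈ S | Δ j ≤ Δ i}))⁻¹) := by
        rw [← mul_sum, sum_add_distrib, sum_const, nsmul_eq_mul, ← mul_sum]
    _ ≤ √(K * n) + C * (K * √(n / K) + 2 * √n * (2 * √K)) := by gcongr; omega
    _ = (1 + C * 5) * √(K * n) := by rw [hKsqrt, sqrt_mul hK0.le]; ring
end
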